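/- arXiv:2604.02894 — 5 statements merged into one kernel-verified Lean document; each statement's English description precedes it below -/
import Mathlib

section
/- If A, B, C are three nonempty subsets of F_5^n satisfying (A+B) ∩ C = ∅, then |A| + |B| + |C| ≤ 6·5^(n-1). -/
open Finset Pointwise

section Key

variable {G : Type*} [AddCommGroup G] [Fintype G] [DecidableEq G]

/-- e-transform induction: if `A + B ≠ univ` then there is a proper subgroup `H`
with `|A| + |B| ≤ |A + B| + |H|`. -/
lemma key_aux : ∀ (k : ℕ) (A B : Finset G), B.card ≤ k → A.Nonempty → B.Nonempty →
    A + B ≠ Finset.univ →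
    ∃ H : AddSubgroup G, H ≠ ⊤ ∧ A.card + B.card ≤ (A + B).card + Nat.card H := by
  intro k
  classical
  induction k with
  | zero =>
    intro A B hk hA hB _
    simp [Finset.card_eq_zero.1 (Nat.le_zero.1 hk)] at hB
  | succ k ih =>
    intro A B hk hA hB hne
    by_cases hcond : ∀ a ∈ A, ∀ b ∈ B, B ⊆ (b - a) +ᵥ A
    · -- A is stabilized by B - B
      obtain ⟨b0, hb0⟩ := hB
      refine ⟨AddAction.stabilizer G A, ?_, ?_⟩
      · intro htop
        apply hne
        apply Finset.eq_univ_of_forall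
        intro x
        obtain ⟨a0, ha0⟩ := hA
        have hx : (x - (a0 + b0)) +ᵥ A = A := by
          have : (x - (a0 + b0)) ∈ AddAction.stabilizer G A := htop ▸ AddSubgroup.mem_top _
          exact AddAction.mem_stabilizer_iff.1 this
        have hxb : x - b0 ∈ A := by
          rw [← hx, Finset.mem_vadd_finset]
          exact ⟨a0, ha0, by simp only [vadd_eq_add]; abel⟩
        simpa using Finset.add_mem_add hxb hb0
      · have hmem : ∀ b ∈ B, b - b0 ∈ AddAction.stabilizer G A := by
          intro b hb
          rw [AddAction.mem_stabilizer_iff]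
          apply Finset.eq_of_subset_of_card_le
          · intro x hx
            rw [Finset.mem_vadd_finset] at hx
            obtain ⟨a, ha, rfl⟩ := hx
            have := hcond a ha b0 hb0 hb
            rw [Finset.mem_vadd_finset] at this
            obtain ⟨a', ha', h'⟩ := this
            have h2 : (b - b0) +ᵥ a = a' := by
              simp only [vadd_eq_add] at h' ⊢
              rw [← h']
              abel
            rwa [h2]
          · rw [Finset.card_vadd_finset]
        have hABcard : A + B = A + {b0} := by
          apply Finset.Subset.antisymm
          · intro x hx
            rw [Finset.mem_add] at hx ⊢
            obtain ⟨a, ha, b, hb, rfl⟩ := hx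
            have hst := AddAction.mem_stabilizer_iff.1 (hmem b hb)
            have : b - b0 + a ∈ A := by
              rw [← hst, Finset.mem_vadd_finset]; exact ⟨a, ha, rfl⟩
            exact ⟨b - b0 + a, this, b0, Finset.mem_singleton_self _, by abel⟩
          · exact Finset.add_subset_add_left (Finset.singleton_subset_iff.2 hb0)
        have hcardAB : (A + B).card = A.card := by
          rw [hABcard]
          simp [Finset.add_singleton]
        have hBle : B.card ≤ Nat.card (AddAction.stabilizer G A) := by
          have h1 : B.card ≤ ((AddAction.stabilizer G A : Set G)).toFinset.card := by
            apply Finset.card_le_card_of_injOn (fun b => b - b0)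
            · intro b hb
              simpa using hmem b hb
            · intro x _ y _ hxy
              simpa using hxy
          simpa [Set.toFinset_card, Nat.card_eq_fintype_card, SetLike.coe_sort_coe] using h1
        omega
    · push_neg at hcond
      obtain ⟨a, ha, b, hb, hnsub⟩ := hcond
      set X : Finset G := (a - b) +ᵥ B with hX
      set A' : Finset G := A ∪ X with hA'
      set B' : Finset G := B ∩ ((b - a) +ᵥ A) with hB'
      have hbB' : b ∈ B' := by
        rw [hB', Finset.mem_inter]
        exact ⟨hb, Finset.mem_vadd_finset.2 ⟨a, ha, by simp [vadd_eq_add]⟩⟩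
      have hB'ssubset : B' ⊂ B := by
        rw [Finset.ssubset_iff_subset_ne]
        refine ⟨Finset.inter_subset_left, ?_⟩
        intro hEq
        apply hnsub
        intro x hx
        rw [← hEq] at hx
        exact (Finset.mem_inter.1 hx).2
      have hB'card : B'.card < B.card := Finset.card_lt_card hB'ssubset
      have hB'vadd : (a - b) +ᵥ B' = X ∩ A := by
        rw [hB', Finset.vadd_finset_inter, hX]
        congr 1
        rw [vadd_vadd]
        simp
      have hcards : A'.card + B'.card = A.card + B.card := by
        have h1 : A'.card + (A ∩ X).card = A.card + X.card :=
          Finset.card_union_add_card_inter A X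
        have h2 : B'.card = (X ∩ A).card := by
          rw [← hB'vadd, Finset.card_vadd_finset]
        have h3 : X.card = B.card := Finset.card_vadd_finset _ _
        rw [Finset.inter_comm] at h2
        omega
      have hsub : A' + B' ⊆ A + B := by
        intro x hx
        rw [Finset.mem_add] at hx
        obtain ⟨u, hu, v, hv, rfl⟩ := hx
        rw [hA', Finset.mem_union] at hu
        have hvB : v ∈ B := Finset.inter_subset_left (hB' ▸ hv)
        rcases hu with hu | hu
        · exact Finset.add_mem_add hu hvB
        · rw [hX, Finset.mem_vadd_finset] at hu
          obtain ⟨b1, hb1, rfl⟩ := hu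
          have hvA : v ∈ (b - a) +ᵥ A := (Finset.mem_inter.1 (hB' ▸ hv)).2
          rw [Finset.mem_vadd_finset] at hvA
          obtain ⟨a1, ha1, rfl⟩ := hvA
          have : (a - b) +ᵥ b1 + ((b - a) +ᵥ a1) = a1 + b1 := by
            simp only [vadd_eq_add]; abel
          rw [Finset.mem_add]
          exact ⟨a1, ha1, b1, hb1, by simp only [vadd_eq_add]; abel⟩
      have hne' : A' + B' ≠ Finset.univ := by
        intro hEq
        apply hne
        apply Finset.eq_univ_of_forall
        intro x
        exact hsub (hEq ▸ Finset.mem_univ x)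
      obtain ⟨H, hH, hle⟩ := ih A' B' (by omega) (hA.mono Finset.subset_union_left)
        ⟨b, hbB'⟩ hne'
      exact ⟨H, hH, by have := Finset.card_le_card hsub; omega⟩

lemma key (A B : Finset G) (hA : A.Nonempty) (hB : B.Nonempty) (hne : A + B ≠ Finset.univ) :
    ∃ H : AddSubgroup G, H ≠ ⊤ ∧ A.card + B.card ≤ (A + B).card + Nat.card H :=
  key_aux B.card A B le_rfl hA hB hne

end Key

theorem stmt_0 (n : ℕ) (A B C : Finset (Fin n → ZMod 5))
    (hA : A.Nonempty) (hB : B.Nonempty) (hC : C.Nonempty)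
    (h : Disjoint (A + B) C) :
    A.card + B.card + C.card ≤ 6 * 5 ^ (n - 1) := by
  classical
  have hG : Fintype.card (Fin n → ZMod 5) = 5 ^ n := by simp
  have hne : A + B ≠ Finset.univ := by
    intro hEq
    obtain ⟨c, hc⟩ := hC
    exact Finset.disjoint_left.1 h (hEq ▸ Finset.mem_univ c) hc
  obtain ⟨H, hH, hle⟩ := key A B hA hB hne
  -- |C| ≤ 5^n - |A+B|
  have hCle : (A + B).card + C.card ≤ 5 ^ n := by
    rw [← hG, ← Finset.card_univ, ← Finset.card_union_of_disjoint h]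
    exact Finset.card_le_card (Finset.subset_univ _)
  -- |H| ≤ 5^(n-1)
  have hHdvd : Nat.card H ∣ 5 ^ n := by
    have := AddSubgroup.card_addSubgroup_dvd_card H
    rwa [Nat.card_eq_fintype_card (α := Fin n → ZMod 5), hG] at this
  have hHlt : Nat.card H < 5 ^ n := by
    rw [← hG]
    rw [Nat.card_eq_fintype_card]
    obtain ⟨x, hx⟩ : ∃ x, x ∉ H := by
      by_contra hx
      push_neg at hx
      exact hH (AddSubgroup.eq_top_iff' H |>.2 hx)
    exact Fintype.card_subtype_lt hx
  have hHle : Nat.card H ≤ 5 ^ (n - 1) := by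
    obtain ⟨k, hk, hEq⟩ := (Nat.dvd_prime_pow (by norm_num : Nat.Prime 5)).1 hHdvd
    rw [hEq] at hHlt ⊢
    have hkn : k < n := by
      by_contra h'
      push_neg at h'
      have : k = n := le_antisymm hk h'
      simp [this] at hHlt
    exact Nat.pow_le_pow_right (by norm_num) (by omega)
  have hn : 1 ≤ n := by
    rcases Nat.eq_zero_or_pos n with rfl | h'
    · exfalso
      simp at hHlt
    · exact h'
  have h6 : 5 ^ n + 5 ^ (n - 1) = 6 * 5 ^ (n - 1) := by
    obtain ⟨m, rfl⟩ : ∃ m, n = m + 1 := ⟨n - 1, by omega⟩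
    simp only [Nat.add_sub_cancel, pow_succ]
    ring
  omega
end

section
/- For every natural number n ≥ 1, the maximum cardinality of a sum-free subset of F_5^n is 2·5^(n-1). -/
/-!
Lower bound: the vectors whose first coordinate lies in the sum-free set `{1, 4} ⊆ 𝔽₅`.

Upper bound: if `A` is sum-free and `x ∈ A`, then `A` and `A + x` are disjoint. For every `g`,
the set `{k ∈ 𝔽₅ | g + k x ∈ A}` is therefore disjoint from its translate by `1`, so it has at
most `2` elements. Double counting the pairs `(g, k)` with `g + k x ∈ A` gives
`5 |A| ≤ 2 · 5ⁿ`.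
-/

open Finset

def IsSumFree {G : Type*} [Add G] (A : Finset G) : Prop :=
  ∀ x ∈ A, ∀ y ∈ A, x + y ∉ A

theorem two_mul_card_le_of_forall_add_notMem {G : Type*} [AddGroup G] [Fintype G]
    [DecidableEq G] {A : Finset G} {x : G} (h : ∀ a ∈ A, a + x ∉ A) :
    2 * #A ≤ Fintype.card G := by
  have hdisj : Disjoint A (A.map (addRightEmbedding x)) := by
    rw [disjoint_left]
    intro b hb hb'
    obtain ⟨a, ha, rfl⟩ := mem_map.mp hb'
    exact h a ha hb
  calc 2 * #A = #(A ∪ A.map (addRightEmbedding x)) := by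
        rw [card_union_of_disjoint hdisj, card_map, two_mul]
    _ ≤ Fintype.card G := card_le_univ _

theorem card_mul_le_of_forall_add_notMem {m : ℕ} [NeZero m] {G : Type*} [AddCommGroup G]
    [Module (ZMod m) G] [Fintype G] [DecidableEq G] {A : Finset G} {x : G}
    (h : ∀ a ∈ A, a + x ∉ A) : m * #A ≤ m / 2 * Fintype.card G := by
  have hfiber : ∀ g : G, #{k : ZMod m | g + k • x ∈ A} ≤ m / 2 := by
    intro g
    have := two_mul_card_le_of_forall_add_notMem (A := {k : ZMod m | g + k • x ∈ A}) (x := 1)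
      (by
        intro k hk
        simp only [mem_filter, mem_univ, true_and] at hk ⊢
        rw [add_smul, one_smul, ← add_assoc]
        exact h _ hk)
    rw [ZMod.card] at this
    omega
  have htranslate : ∀ k : ZMod m, #{g : G | g + k • x ∈ A} = #A := fun k =>
    card_nbij' (· + k • x) (· - k • x) (fun _ => by simp) (fun _ => by simp) (fun _ _ => by simp)
      (fun _ _ => by simp)
  calc m * #A = ∑ k : ZMod m, #{g : G | g + k • x ∈ A} := by simp [htranslate, ZMod.card]
    _ = ∑ g : G, #{k : ZMod m | g + k • x ∈ A} := by simp only [card_filter]; exact sum_comm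
    _ ≤ ∑ _g : G, m / 2 := sum_le_sum fun g _ => hfiber g
    _ = m / 2 * Fintype.card G := by rw [sum_const, card_univ, smul_eq_mul, mul_comm]

theorem IsSumFree.card_mul_le {m : ℕ} [NeZero m] {G : Type*} [AddCommGroup G]
    [Module (ZMod m) G] [Fintype G] [DecidableEq G] {A : Finset G} (hA : IsSumFree A) :
    m * #A ≤ m / 2 * Fintype.card G := by
  obtain rfl | ⟨x, hx⟩ := A.eq_empty_or_nonempty
  · simp
  · exact card_mul_le_of_forall_add_notMem fun a ha => hA a ha x hx

section FirstCoordinate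

variable {R : Type*} [Fintype R] {m : ℕ} (T : Finset R)

def firstCoordIn : Finset (Fin (m + 1) → R) :=
  Fintype.piFinset (Fin.cons T fun _ => univ)

theorem IsSumFree.firstCoordIn [Add R] (hT : IsSumFree T) :
    IsSumFree (firstCoordIn (m := m) T) := by
  intro x hx y hy hxy
  simp only [_root_.firstCoordIn, Fintype.mem_piFinset] at hx hy hxy
  exact hT _ (hx 0) _ (hy 0) (hxy 0)

theorem card_firstCoordIn : #(firstCoordIn (m := m) T) = #T * Fintype.card R ^ m := by
  simp [firstCoordIn, Fintype.card_piFinset, Fin.prod_univ_succ]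

end FirstCoordinate

theorem stmt_1 (n : ℕ) (hn : 1 ≤ n) :
    IsGreatest {k : ℕ | ∃ A : Finset (Fin n → ZMod 5),
      (∀ x ∈ A, ∀ y ∈ A, x + y ∉ A) ∧ A.card = k} (2 * 5 ^ (n - 1)) := by
  obtain ⟨m, rfl⟩ := Nat.exists_eq_add_of_le' hn
  have hT : IsSumFree ({1, 4} : Finset (ZMod 5)) := by unfold IsSumFree; decide
  refine ⟨⟨firstCoordIn {1, 4}, hT.firstCoordIn, ?_⟩, ?_⟩
  · rw [card_firstCoordIn, ZMod.card]
    rfl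
  · rintro k ⟨A, hA, rfl⟩
    have := IsSumFree.card_mul_le (m := 5) hA
    rw [Fintype.card_fun, ZMod.card, Fintype.card_fin, pow_succ] at this
    simp only [Nat.add_sub_cancel]
    omega
end

section
/- If I ⊆ F_5^2 has |I| ≥ 9 and the complement of the difference set I - I contains two linearly independent vectors, then I is contained in the union of three parallel lines. -/
/-!
A linear change of coordinates sends `u, v` to `(1, 1), (1, -1)`, so `I` becomes a set `S` with
no two points diagonally adjacent. Consecutive fibres `D s, D (s + 1)` of the first projection
then contain no two elements at distance one, and Cauchy–Davenport gives
`|D s| + |D (s + 1)| ≤ 4` when both are nonempty. With `|S| ≥ 9` this leaves two cases: two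
fibres are empty, so `S` lies on three vertical lines; or all fibres are nonempty, two
consecutive pairs of fibres are extremal, and the equality case pins every fibre inside
`D j ∪ D (j + 1)`, a set of at most three elements, so `S` lies on three horizontal lines.
-/

open Finset Pointwise

theorem ZMod.card_add_card_add_card_le_of_disjoint_add {p : ℕ} (hp : p.Prime)
    {A B T : Finset (ZMod p)} (hA : A.Nonempty) (hB : B.Nonempty) (hT : T.Nonempty)
    (h : Disjoint B (A + T)) : #A + #B + #T ≤ p + 1 := by
  have : NeZero p := ⟨hp.ne_zero⟩
  have hcd := ZMod.cauchy_davenport hp hA hT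
  have hunion : #B + #(A + T) ≤ p :=
    card_union_of_disjoint h ▸ (card_le_univ _).trans_eq (ZMod.card p)
  have := hB.card_pos
  omega

def Apart (A B : Finset (ZMod 5)) : Prop := Disjoint B (A + {1, -1})

namespace Apart

variable {A B C : Finset (ZMod 5)}

theorem symm (h : Apart A B) : Apart B A := by
  refine disjoint_left.2 fun a ha hab => ?_
  obtain ⟨b, hb, t, ht, rfl⟩ := mem_add.1 hab
  refine disjoint_left.1 h hb (mem_add.2 ⟨b + t, ha, -t, ?_, by ring⟩)
  rcases mem_insert.1 ht with rfl | ht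
  · simp
  · simp [mem_singleton.1 ht]

theorem card_add_card_le_four (h : Apart A B) (hA : A.Nonempty) (hB : B.Nonempty) :
    #A + #B ≤ 4 := by
  have := ZMod.card_add_card_add_card_le_of_disjoint_add Nat.prime_five hA hB (by simp) h
  rw [card_pair (by decide)] at this
  omega

theorem subset_of_four_le (hBA : Apart B A) (hBC : Apart B C) (hB : B.Nonempty)
    (h : 4 ≤ #A + #B) : C ⊆ A := by
  intro c hc
  by_contra hcA
  have hdisj : Apart B (insert c A) :=
    disjoint_insert_left.2 ⟨disjoint_left.1 hBC hc, hBA⟩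
  have := hdisj.symm.card_add_card_le_four (insert_nonempty c A) hB
  rw [card_insert_of_notMem hcA] at this
  omega

theorem card_union_le_three (h : Apart A B) (hA : A.Nonempty) (hB : B.Nonempty) :
    #(A ∪ B) ≤ 3 := by
  have hsum := card_union_add_card_inter A B
  have := h.card_add_card_le_four hA hB
  rcases (A ∩ B).eq_empty_or_nonempty with hAB | hAB
  · have hdisj : Disjoint B (A + {0, 1, -1}) := by
      refine disjoint_left.2 fun b hb hbA => ?_
      obtain ⟨a, ha, t, ht, rfl⟩ := mem_add.1 hbA
      rcases mem_insert.1 ht with rfl | ht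
      · exact (eq_empty_iff_forall_notMem.1 hAB) a (mem_inter.2 ⟨ha, by simpa using hb⟩)
      · exact disjoint_left.1 h hb (add_mem_add ha ht)
    have := ZMod.card_add_card_add_card_le_of_disjoint_add Nat.prime_five hA hB (by simp) hdisj
    rw [show #({0, 1, -1} : Finset (ZMod 5)) = 3 by rfl] at this
    omega
  · have := hAB.card_pos
    omega

end Apart

def fiber {α β : Type*} [Fintype β] [DecidableEq α] [DecidableEq β] (S : Finset (α × β)) (a : α) :
    Finset β :=
  {b | (a, b) ∈ S}

theorem sum_card_fiber {α β : Type*} [Fintype α] [Fintype β] [DecidableEq α] [DecidableEq β]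
    (S : Finset (α × β)) : ∑ a, #(fiber S a) = #S := by
  simp only [fiber, card_filter]
  rw [← Fintype.sum_prod_type (fun p => if p ∈ S then 1 else 0), sum_boole]
  simp

theorem ZMod.sum_five {M : Type*} [AddCommMonoid M] (f : ZMod 5 → M) :
    ∑ s, f s = f 0 + f 1 + f 2 + f 3 + f 4 :=
  Fin.sum_univ_five f

theorem ZMod.five_cases (j : ZMod 5) : j = 0 ∨ j = 1 ∨ j = 2 ∨ j = 3 ∨ j = 4 := by
  revert j
  decide

theorem card_ne_zero_le_three_or_forall_ne_zero (f : ZMod 5 → ℕ)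
    (hf : ∀ s, f s ≠ 0 → f (s + 1) ≠ 0 → f s + f (s + 1) ≤ 4) (h : 9 ≤ ∑ s, f s) :
    #{s | f s ≠ 0} ≤ 3 ∨ ∀ s, f s ≠ 0 := by
  rw [or_iff_not_imp_right, not_forall, card_filter]
  rintro ⟨j, hj⟩
  have h0 : f 0 ≠ 0 → f 1 ≠ 0 → f 0 + f 1 ≤ 4 := hf 0
  have h1 : f 1 ≠ 0 → f 2 ≠ 0 → f 1 + f 2 ≤ 4 := hf 1
  have h2 : f 2 ≠ 0 → f 3 ≠ 0 → f 2 + f 3 ≤ 4 := hf 2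
  have h3 : f 3 ≠ 0 → f 4 ≠ 0 → f 3 + f 4 ≤ 4 := hf 3
  have h4 : f 4 ≠ 0 → f 0 ≠ 0 → f 4 + f 0 ≤ 4 := hf 4
  rw [ZMod.sum_five] at h ⊢
  rcases ZMod.five_cases j with rfl | rfl | rfl | rfl | rfl <;> split_ifs <;> omega

theorem exists_four_le_of_forall_le_four (f : ZMod 5 → ℕ) (hf : ∀ s, f s + f (s + 1) ≤ 4)
    (h : 9 ≤ ∑ s, f s) : ∃ j, 4 ≤ f j + f (j + 1) ∧ 4 ≤ f (j + 1) + f (j + 2) := by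
  have h0 : f 0 + f 1 ≤ 4 := hf 0
  have h1 : f 1 + f 2 ≤ 4 := hf 1
  have h2 : f 2 + f 3 ≤ 4 := hf 2
  have h3 : f 3 + f 4 ≤ 4 := hf 3
  have h4 : f 4 + f 0 ≤ 4 := hf 4
  rw [ZMod.sum_five] at h
  by_contra! H
  have g0 : 4 ≤ f 0 + f 1 → f 1 + f 2 < 4 := H 0
  have g1 : 4 ≤ f 1 + f 2 → f 2 + f 3 < 4 := H 1
  have g2 : 4 ≤ f 2 + f 3 → f 3 + f 4 < 4 := H 2
  have g3 : 4 ≤ f 3 + f 4 → f 4 + f 0 < 4 := H 3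
  have g4 : 4 ≤ f 4 + f 0 → f 0 + f 1 < 4 := H 4
  omega

section Cycle

variable {D : ZMod 5 → Finset (ZMod 5)}

theorem subset_union_of_four_le (hD : ∀ s, Apart (D s) (D (s + 1)))
    (hne : ∀ s, (D s).Nonempty) (h01 : 4 ≤ #(D 0) + #(D 1)) (h12 : 4 ≤ #(D 1) + #(D 2)) :
    ∀ s, D s ⊆ D 0 ∪ D 1 := by
  have h2 : D 2 ⊆ D 0 := (hD 0).symm.subset_of_four_le (hD 1) (hne 1) h01
  have h3 : D 3 ⊆ D 1 := (hD 1).symm.subset_of_four_le (hD 2) (hne 2) h12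
  have h4 : D 4 ⊆ D 1 :=
    (hD 0).subset_of_four_le (hD 4).symm (hne 0) (by omega : 4 ≤ #(D 1) + #(D 0))
  intro s
  rcases ZMod.five_cases s with rfl | rfl | rfl | rfl | rfl
  · exact subset_union_left
  · exact subset_union_right
  · exact h2.trans subset_union_left
  · exact h3.trans subset_union_right
  · exact h4.trans subset_union_right

theorem card_nonempty_le_three_or_card_biUnion_le_three (hD : ∀ s, Apart (D s) (D (s + 1)))
    (h9 : 9 ≤ ∑ s, #(D s)) : #{s | (D s).Nonempty} ≤ 3 ∨ #(univ.biUnion D) ≤ 3 := by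
  have hf : ∀ s, #(D s) ≠ 0 → #(D (s + 1)) ≠ 0 → #(D s) + #(D (s + 1)) ≤ 4 := fun s h h' =>
    (hD s).card_add_card_le_four (card_ne_zero.1 h) (card_ne_zero.1 h')
  simp_rw [← card_ne_zero]
  refine (card_ne_zero_le_three_or_forall_ne_zero _ hf h9).imp_right fun hne => ?_
  obtain ⟨j, h01, h12⟩ := exists_four_le_of_forall_le_four _ (fun s => hf s (hne s) (hne _)) h9
  have hsub := subset_union_of_four_le (D := fun s => D (j + s))
    (fun s => by simpa only [add_assoc] using hD (j + s)) (fun s => card_ne_zero.1 (hne _))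
    (by simpa using h01) h12
  calc #(univ.biUnion D) ≤ #(D j ∪ D (j + 1)) :=
        card_le_card (biUnion_subset.2 fun s _ => by simpa using hsub (s - j))
    _ ≤ 3 := (hD j).card_union_le_three (card_ne_zero.1 (hne j)) (card_ne_zero.1 (hne _))

end Cycle

theorem apart_fiber {S : Finset (ZMod 5 × ZMod 5)} (h₁ : ((1, 1) : ZMod 5 × ZMod 5) ∉ S - S)
    (h₂ : ((1, -1) : ZMod 5 × ZMod 5) ∉ S - S) (s : ZMod 5) :
    Apart (fiber S s) (fiber S (s + 1)) := by
  refine disjoint_left.2 fun d hd hd' => ?_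
  obtain ⟨c, hc, t, ht, rfl⟩ := mem_add.1 hd'
  simp only [fiber, mem_filter, mem_univ, true_and] at hc hd
  have hdiff : ((1, t) : ZMod 5 × ZMod 5) ∈ S - S := mem_sub.2 ⟨_, hd, _, hc, by simp⟩
  rcases mem_insert.1 ht with rfl | ht
  · exact h₁ hdiff
  · exact h₂ (mem_singleton.1 ht ▸ hdiff)

theorem card_image_fst_le_three_or_card_image_snd_le_three {S : Finset (ZMod 5 × ZMod 5)}
    (hS : 9 ≤ #S) (h₁ : ((1, 1) : ZMod 5 × ZMod 5) ∉ S - S)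
    (h₂ : ((1, -1) : ZMod 5 × ZMod 5) ∉ S - S) :
    #(S.image Prod.fst) ≤ 3 ∨ #(S.image Prod.snd) ≤ 3 := by
  have hfst : S.image Prod.fst = ({s | (fiber S s).Nonempty} : Finset (ZMod 5)) := by
    ext s; simp [fiber, Finset.Nonempty]
  have hsnd : S.image Prod.snd = univ.biUnion (fiber S) := by
    ext d; simp [fiber]
  rw [hfst, hsnd]
  exact card_nonempty_le_three_or_card_biUnion_le_three (apart_fiber h₁ h₂)
    ((sum_card_fiber S).symm ▸ hS)

theorem exists_linearEquiv_apply_eq_apply_eq {K V W : Type*} [DivisionRing K] [AddCommGroup V]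
    [Module K V] [AddCommGroup W] [Module K W] {u v : V} {u' v' : W}
    (h : LinearIndependent K ![u, v]) (h' : LinearIndependent K ![u', v'])
    (hV : Module.finrank K V = 2) (hW : Module.finrank K W = 2) :
    ∃ e : V ≃ₗ[K] W, e u = u' ∧ e v = v' := by
  let B := basisOfLinearIndependentOfCardEqFinrank h (by simp [hV])
  let B' := basisOfLinearIndependentOfCardEqFinrank h' (by simp [hW])
  refine ⟨B.equiv B' (Equiv.refl _), ?_, ?_⟩
  · simpa [B, B'] using B.equiv_apply 0 B' (Equiv.refl _)
  · simpa [B, B'] using B.equiv_apply 1 B' (Equiv.refl _)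

theorem exists_forall_mem_eq_of_card_image_le_three {α β : Type*} [Fintype β] [DecidableEq β]
    (hβ : 3 ≤ Fintype.card β) (f : α → β) {I : Finset α} (h : #(I.image f) ≤ 3) :
    ∃ c₁ c₂ c₃, ∀ p ∈ I, f p = c₁ ∨ f p = c₂ ∨ f p = c₃ := by
  obtain ⟨U, hIU, hU⟩ := exists_superset_card_eq h hβ
  obtain ⟨c₁, c₂, c₃, -, -, -, rfl⟩ := card_eq_three.1 hU
  exact ⟨c₁, c₂, c₃, fun p hp => by simpa using hIU (mem_image_of_mem f hp)⟩

theorem stmt_6 (I : Finset (ZMod 5 × ZMod 5)) (hcard : 9 ≤ I.card)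
    (u v : ZMod 5 × ZMod 5) (hli : LinearIndependent (ZMod 5) ![u, v])
    (hu : u ∉ I - I) (hv : v ∉ I - I) :
    ∃ (φ : (ZMod 5 × ZMod 5) →ₗ[ZMod 5] ZMod 5) (c₁ c₂ c₃ : ZMod 5),
      Function.Surjective φ ∧ ∀ p ∈ I, φ p = c₁ ∨ φ p = c₂ ∨ φ p = c₃ := by
  have hdiag : LinearIndependent (ZMod 5) ![((1, 1) : ZMod 5 × ZMod 5), (1, -1)] := by
    rw [LinearIndependent.pair_iff]
    decide
  have : Fact (Nat.Prime 5) := ⟨Nat.prime_five⟩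
  obtain ⟨e, heu, hev⟩ := exists_linearEquiv_apply_eq_apply_eq hli hdiag (by simp) (by simp)
  have hsub : (I - I).image e = I.image e - I.image e := image_image₂_distrib (map_sub e)
  obtain ⟨φ, hφ, h⟩ : ∃ φ : (ZMod 5 × ZMod 5) →ₗ[ZMod 5] ZMod 5,
      Function.Surjective φ ∧ #(I.image φ) ≤ 3 := by
    rcases card_image_fst_le_three_or_card_image_snd_le_three
        (by rwa [card_image_of_injective _ e.injective])
        (by rwa [← heu, ← hsub, e.injective.mem_finset_image])
        (by rwa [← hev, ← hsub, e.injective.mem_finset_image]) with h | h <;>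
      rw [image_image] at h
    exacts [⟨LinearMap.fst _ _ _ ∘ₗ e.toLinearMap, Prod.fst_surjective.comp e.surjective, h⟩,
      ⟨LinearMap.snd _ _ _ ∘ₗ e.toLinearMap, Prod.snd_surjective.comp e.surjective, h⟩]
  obtain ⟨c₁, c₂, c₃, hc⟩ := exists_forall_mem_eq_of_card_image_le_three (by simp) φ h
  exact ⟨φ, c₁, c₂, c₃, hφ, hc⟩
end

section
/- The set Λ ⊆ F_5^3 (defined below) is not normal: there is no affine hyperplane H of F_5^3 with 0 ∉ H such that Λ ⊆ H ∪ (-H). -/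
/-- The Lev–Versteegen set `Λ ⊆ F_5^3`. -/
def Lam : Set (ZMod 5 × ZMod 5 × ZMod 5) :=
  {p | (p.1, p.2.1) ∈ ({(1, 0), (-1, 0), (0, 1), (0, -1)} : Set (ZMod 5 × ZMod 5))} ∪
    {(-1, 2, 0), (-1, 2, 1), (2, 1, 1), (2, 1, 2),
      (1, -2, 0), (1, -2, -1), (-2, -1, -1), (-2, -1, -2)}

lemma key_dec : ∀ a b d c : ZMod 5, c ≠ 0 →
    ¬ ((∀ z : ZMod 5, 1*a + 0*b + z*d = c ∨ 1*a + 0*b + z*d = -c) ∧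
       (∀ z : ZMod 5, 0*a + 1*b + z*d = c ∨ 0*a + 1*b + z*d = -c) ∧
       ((-1)*a + 2*b + 0*d = c ∨ (-1)*a + 2*b + 0*d = -c) ∧
       ((-1)*a + 2*b + 1*d = c ∨ (-1)*a + 2*b + 1*d = -c) ∧
       (2*a + 1*b + 1*d = c ∨ 2*a + 1*b + 1*d = -c) ∧
       (2*a + 1*b + 2*d = c ∨ 2*a + 1*b + 2*d = -c) ∧
       (1*a + (-2)*b + 0*d = c ∨ 1*a + (-2)*b + 0*d = -c) ∧
       (1*a + (-2)*b + (-1)*d = c ∨ 1*a + (-2)*b + (-1)*d = -c) ∧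
       ((-2)*a + (-1)*b + (-1)*d = c ∨ (-2)*a + (-1)*b + (-1)*d = -c) ∧
       ((-2)*a + (-1)*b + (-2)*d = c ∨ (-2)*a + (-1)*b + (-2)*d = -c)) := by decide

theorem stmt_8 :
    ¬ ∃ (φ : (ZMod 5 × ZMod 5 × ZMod 5) →ₗ[ZMod 5] ZMod 5) (c : ZMod 5),
      Function.Surjective φ ∧ c ≠ 0 ∧
        Lam ⊆ {x | φ x = c} ∪ {x | φ x = -c} := by
  rintro ⟨φ, c, -, hc, hsub⟩
  set a := φ (1,0,0) with ha
  set b := φ (0,1,0) with hb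
  set d := φ (0,0,1) with hd
  have hφ : ∀ x y z : ZMod 5, φ (x,y,z) = x * a + y * b + z * d := by
    intro x y z
    have hx : (x,y,z) = x • ((1:ZMod 5),(0:ZMod 5),(0:ZMod 5)) + y • ((0:ZMod 5),(1:ZMod 5),(0:ZMod 5)) + z • ((0:ZMod 5),(0:ZMod 5),(1:ZMod 5)) := by
      simp [Prod.ext_iff]
    rw [hx, map_add, map_add, map_smul, map_smul, map_smul, smul_eq_mul, smul_eq_mul, smul_eq_mul]
  have mem1 : ∀ z : ZMod 5, ((1:ZMod 5), (0:ZMod 5), z) ∈ Lam := by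
    intro z; left; simp
  have mem2 : ∀ z : ZMod 5, ((0:ZMod 5), (1:ZMod 5), z) ∈ Lam := by
    intro z; left; simp
  have get : ∀ p ∈ Lam, φ p = c ∨ φ p = -c := fun p hp => hsub hp
  have h1 : ∀ z : ZMod 5, 1*a + 0*b + z*d = c ∨ 1*a + 0*b + z*d = -c := by
    intro z; have := get _ (mem1 z); rwa [hφ] at this
  have h2 : ∀ z : ZMod 5, 0*a + 1*b + z*d = c ∨ 0*a + 1*b + z*d = -c := by
    intro z; have := get _ (mem2 z); rwa [hφ] at this
  have h5 := get (-1, 2, 0) (by right; simp)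
  have h6 := get (-1, 2, 1) (by right; simp)
  have h7 := get (2, 1, 1) (by right; simp)
  have h8 := get (2, 1, 2) (by right; simp)
  have h9 := get (1, -2, 0) (by right; simp)
  have h10 := get (1, -2, -1) (by right; simp)
  have h11 := get (-2, -1, -1) (by right; simp)
  have h12 := get (-2, -1, -2) (by right; simp)
  rw [hφ] at h5 h6 h7 h8 h9 h10 h11 h12
  exact key_dec a b d c hc ⟨h1, h2, h5, h6, h7, h8, h9, h10, h11, h12⟩
end

section
/- If for some n ≥ 2 a sum-free set A ⊆ F_5^n of size |A| > 5^(n-1) is contained in the union of two parallel affine hyperplanes, then A is normal, i.e., A ⊆ H ∪ (-H) for some affine hyperplane H not containing the origin. -/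
theorem stmt_12 (n : ℕ) (hn : 2 ≤ n) (A : Finset (Fin n → ZMod 5))
    (hsf : ∀ x ∈ A, ∀ y ∈ A, x + y ∉ A) (hcard : 5 ^ (n - 1) < A.card)
    (φ : (Fin n → ZMod 5) →ₗ[ZMod 5] ZMod 5) (hφ : Function.Surjective φ)
    (c₁ c₂ : ZMod 5) (hcov : ∀ a ∈ A, φ a = c₁ ∨ φ a = c₂) :
    ∃ (ψ : (Fin n → ZMod 5) →ₗ[ZMod 5] ZMod 5) (d : ZMod 5),
      Function.Surjective ψ ∧ d ≠ 0 ∧ ∀ a ∈ A, ψ a = d ∨ ψ a = -d := by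
  classical
  let fib : ZMod 5 → Finset (Fin n → ZMod 5) :=
    fun c => Finset.univ.filter (fun x => φ x = c)
  have hfib_eq : ∀ c : ZMod 5, (fib c).card = (fib 0).card := by
    intro c
    obtain ⟨t, ht⟩ := hφ c
    apply Finset.card_bij (fun x _ => x - t)
    · intro x hx
      simp only [fib, Finset.mem_filter, Finset.mem_univ, true_and] at hx ⊢
      simp [map_sub, hx, ht]
    · intro x hx y hy h
      exact by simpa using sub_left_injective h
    · intro y hy
      refine ⟨y + t, ?_, by abel⟩
      simp only [fib, Finset.mem_filter, Finset.mem_univ, true_and] at hy ⊢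
      simp [map_add, hy, ht]
  have hsum : ∑ c : ZMod 5, (fib c).card = 5 ^ n := by
    have h1 : (Finset.univ : Finset (Fin n → ZMod 5)).card
        = ∑ c : ZMod 5, (fib c).card :=
      Finset.card_eq_sum_card_fiberwise (fun x _ => Finset.mem_univ (φ x))
    rw [← h1, Finset.card_univ]
    simp [Fintype.card_fun]
  have hfib0 : (fib 0).card = 5 ^ (n - 1) := by
    have h5 : 5 * (fib 0).card = 5 ^ n := by
      rw [← hsum]
      rw [Finset.sum_congr rfl (fun c _ => hfib_eq c), Finset.sum_const]
      simp [Nat.card_eq_fintype_card, mul_comm]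
    have hn1 : n - 1 + 1 = n := by omega
    have : (5 : ℕ) ^ n = 5 ^ (n - 1) * 5 := by
      rw [← pow_succ, hn1]
    omega
  have hfibcard : ∀ c, (fib c).card = 5 ^ (n - 1) :=
    fun c => (hfib_eq c).trans hfib0
  -- key shifting lemma
  have key : ∀ a ∈ A, ∀ c : ZMod 5,
      (A.filter (fun x => φ x = c)).card
        + (A.filter (fun x => φ x = φ a + c)).card ≤ 5 ^ (n - 1) := by
    intro a ha c
    set B := A.filter (fun x => φ x = c) with hB
    set C := A.filter (fun x => φ x = φ a + c) with hC
    set B' := B.image (fun x => a + x) with hB'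
    have hcardB' : B'.card = B.card :=
      Finset.card_image_of_injective _ (add_right_injective a)
    have hdisj : Disjoint B' C := by
      rw [Finset.disjoint_left]
      intro z hz hzC
      simp only [hB', Finset.mem_image] at hz
      obtain ⟨x, hx, rfl⟩ := hz
      have hxA : x ∈ A := (Finset.mem_filter.1 hx).1
      have hzA : a + x ∈ A := (Finset.mem_filter.1 hzC).1
      exact hsf a ha x hxA hzA
    have hsub : B' ∪ C ⊆ fib (φ a + c) := by
      intro z hz
      simp only [fib, Finset.mem_filter, Finset.mem_univ, true_and]
      rcases Finset.mem_union.1 hz with hz | hz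
      · simp only [hB', Finset.mem_image] at hz
        obtain ⟨x, hx, rfl⟩ := hz
        have := (Finset.mem_filter.1 hx).2
        simp [map_add, this]
      · exact (Finset.mem_filter.1 hz).2
    have := Finset.card_le_card hsub
    rw [Finset.card_union_of_disjoint hdisj, hcardB'] at this
    calc B.card + C.card ≤ (fib (φ a + c)).card := this
      _ = 5 ^ (n - 1) := hfibcard _
  set A₁ := A.filter (fun x => φ x = c₁) with hA₁
  set A₂ := A.filter (fun x => φ x = c₂) with hA₂
  have hAsub : ∀ c, (A.filter (fun x => φ x = c)).card ≤ 5 ^ (n - 1) := by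
    intro c
    calc (A.filter (fun x => φ x = c)).card ≤ (fib c).card :=
          Finset.card_le_card (fun x hx => by
            simp only [fib, Finset.mem_filter, Finset.mem_univ, true_and]
            exact (Finset.mem_filter.1 hx).2)
      _ = 5 ^ (n - 1) := hfibcard c
  have hbig : 5 ^ (n - 1) < A₁.card + A₂.card := by
    have hsub : A ⊆ A₁ ∪ A₂ := by
      intro a ha
      rcases hcov a ha with h | h
      · exact Finset.mem_union_left _ (Finset.mem_filter.2 ⟨ha, h⟩)
      · exact Finset.mem_union_right _ (Finset.mem_filter.2 ⟨ha, h⟩)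
    calc 5 ^ (n - 1) < A.card := hcard
      _ ≤ (A₁ ∪ A₂).card := Finset.card_le_card hsub
      _ ≤ A₁.card + A₂.card := Finset.card_union_le _ _
  by_cases hc12 : c₁ = c₂
  · exfalso
    have : A ⊆ A₁ := fun a ha => Finset.mem_filter.2 ⟨ha, by
      rcases hcov a ha with h | h
      · exact h
      · rw [h, hc12]⟩
    have h2 := Finset.card_le_card this
    have h3 := hAsub c₁
    rw [← hA₁] at h3
    omega
  have hA₁ne : A₁.Nonempty := by
    rw [Finset.nonempty_iff_ne_empty]
    intro hemp
    have hsub2 : A ⊆ A₂ := by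
      intro a ha
      rcases hcov a ha with h | h
      · exfalso
        have : a ∈ A₁ := Finset.mem_filter.2 ⟨ha, h⟩
        simp [hemp] at this
      · exact Finset.mem_filter.2 ⟨ha, h⟩
    have h2 := Finset.card_le_card hsub2
    have h3 := hAsub c₂
    rw [← hA₂] at h3
    omega
  have hA₂ne : A₂.Nonempty := by
    rw [Finset.nonempty_iff_ne_empty]
    intro hemp
    have hsub2 : A ⊆ A₁ := by
      intro a ha
      rcases hcov a ha with h | h
      · exact Finset.mem_filter.2 ⟨ha, h⟩
      · exfalso
        have : a ∈ A₂ := Finset.mem_filter.2 ⟨ha, h⟩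
        simp [hemp] at this
    have h2 := Finset.card_le_card hsub2
    have h3 := hAsub c₁
    rw [← hA₁] at h3
    omega
  obtain ⟨a₁, ha₁⟩ := hA₁ne
  obtain ⟨a₂, ha₂⟩ := hA₂ne
  have ha₁A : a₁ ∈ A := (Finset.mem_filter.1 ha₁).1
  have hφa₁ : φ a₁ = c₁ := (Finset.mem_filter.1 ha₁).2
  have ha₂A : a₂ ∈ A := (Finset.mem_filter.1 ha₂).1
  have hφa₂ : φ a₂ = c₂ := (Finset.mem_filter.1 ha₂).2
  by_cases h0 : c₁ = 0
  · exfalso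
    have e1 : c₁ + c₁ = c₁ := by rw [h0]; simp
    have e2 : c₁ + c₂ = c₂ := by rw [h0]; simp
    have k1 := key a₁ ha₁A c₁
    have k2 := key a₁ ha₁A c₂
    rw [hφa₁, e1, ← hA₁] at k1
    rw [hφa₁, e2, ← hA₂] at k2
    omega
  by_cases h0' : c₂ = 0
  · exfalso
    have e1 : c₂ + c₁ = c₁ := by rw [h0']; simp
    have e2 : c₂ + c₂ = c₂ := by rw [h0']; simp
    have k1 := key a₂ ha₂A c₁
    have k2 := key a₂ ha₂A c₂
    rw [hφa₂, e1, ← hA₁] at k1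
    rw [hφa₂, e2, ← hA₂] at k2
    omega
  by_cases hneg : c₂ = -c₁
  · refine ⟨φ, c₁, hφ, h0, fun a ha => ?_⟩
    rcases hcov a ha with h | h
    · exact Or.inl h
    · exact Or.inr (by rw [h, hneg])
  · exfalso
    have hdec : ∀ x y : ZMod 5, x ≠ 0 → y ≠ 0 → x ≠ y → y ≠ -x →
        (x + x = y ∨ y + y = x) := by decide
    rcases hdec c₁ c₂ h0 h0' hc12 hneg with h | h
    · have k := key a₁ ha₁A c₁
      rw [hφa₁, h, ← hA₁, ← hA₂] at k
      omega
    · have k := key a₂ ha₂A c₂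
      rw [hφa₂, h, ← hA₂, ← hA₁] at k
      omega
end
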